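/- arXiv:2409.11559 — 2 statements merged into one kernel-verified Lean document; each statement's English description precedes it below -/
import Mathlib

section
/- Let s_1, ..., s_n be integers and let S = s_1 + ... + s_n. Then the integer n·S + Σ_{i=1}^n gcd(s_i, S) is even. -/
/-!
Modulo 2, `gcd a b ≡ a + b + a b`, since the gcd is even exactly when `a` and `b` both are.
Summing over `i` with `b = S` gives `∑ gcd (s i) S ≡ S + n S + S² ≡ n S`, using `S² ≡ S`,
so the total is `2 n S ≡ 0`.
-/

theorem Int.even_gcd_iff (a b : ℤ) : Even (Int.gcd a b : ℤ) ↔ Even a ∧ Even b := by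
  simp only [even_iff_two_dvd, Int.dvd_coe_gcd_iff]

theorem Int.natCast_gcd_zmod_two (a b : ℤ) : (Int.gcd a b : ZMod 2) = a + b + a * b := by
  have eq_iff : ∀ x y : ZMod 2, x = y ↔ (x = 0 ↔ y = 0) := by decide
  have rhs_eq_zero : ∀ x y : ZMod 2, x + y + x * y = 0 ↔ x = 0 ∧ y = 0 := by decide
  rw [eq_iff, rhs_eq_zero, ← Int.cast_natCast, ZMod.intCast_eq_zero_iff_even,
    ZMod.intCast_eq_zero_iff_even, ZMod.intCast_eq_zero_iff_even, Int.even_gcd_iff]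

theorem stmt2 (n : ℕ) (s : Fin n → ℤ) :
    Even ((n : ℤ) * (∑ i, s i) + ∑ i, (Int.gcd (s i) (∑ j, s j) : ℤ)) := by
  rw [← ZMod.intCast_eq_zero_iff_even]
  push_cast [Int.natCast_gcd_zmod_two]
  simp only [Finset.sum_add_distrib, ← Finset.sum_mul, Finset.sum_const, Finset.card_univ,
    Fintype.card_fin, nsmul_eq_mul]
  generalize (n : ZMod 2) = m, ∑ i, (s i : ZMod 2) = S
  revert m S
  decide
end

section
/- Let T be a decorated tree. Then M(T) + F(T) is an even integer. Consequently, the genus g(T) = (2 - M(T) - F(T))/2 and the δ-invariant δ(T) = (F(T) - M(T))/2 are integers. -/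
open Finset
open scoped Classical

/-- A decorated tree: a finite tree on cells `C = V ∪ A`, where `isArrow`
distinguishes arrows (of valency 1) from vertices.  `f a` is the decoration of
the arrow `a`, and `q x y` is the decoration of the edge `{x,y}` near `x`.
Decorations at arrows are `1`; decorations near a vertex are pairwise coprime. -/
structure DecTree where
  C : Type
  [fintypeC : Fintype C]
  [decEqC : DecidableEq C]
  G : SimpleGraph C
  [decAdj : DecidableRel G.Adj]
  isTree : G.IsTree
  isArrow : C → Prop
  [decArrow : DecidablePred isArrow]
  arrowValency : ∀ a, isArrow a → G.degree a = 1
  f : C → ℤ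
  q : C → C → ℤ
  q_arrow : ∀ a x, isArrow a → G.Adj a x → q a x = 1
  q_coprime : ∀ v x y, ¬ isArrow v → G.Adj v x → G.Adj v y → x ≠ y →
    IsCoprime (q v x) (q v y)

attribute [instance] DecTree.fintypeC DecTree.decEqC DecTree.decAdj DecTree.decArrow

namespace DecTree

variable (T : DecTree)

/-- The unique path between two cells of the tree. -/
noncomputable def path (x y : T.C) : T.G.Walk x y :=
  (T.isTree.existsUnique_path x y).exists.choose

/-- `xva T v a` is the quantity `x_{v,a}`: the decoration `f a` times the
product of the decorations `q(ε,u)` over all edges `ε = {u,w}` incident to the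
path from `v` to `a` (i.e. `u` on the path, `w` off the path). -/
noncomputable def xva (v a : T.C) : ℤ :=
  T.f a * ∏ uw ∈ Finset.univ.filter (fun uw : T.C × T.C =>
      uw.1 ∈ (T.path v a).support ∧ T.G.Adj uw.1 uw.2 ∧
        uw.2 ∉ (T.path v a).support),
    T.q uw.1 uw.2

/-- `xhat T v a` is `x̂_{v,a}`: as `x_{v,a}` but omitting edges incident to `v`. -/
noncomputable def xhat (v a : T.C) : ℤ :=
  T.f a * ∏ uw ∈ Finset.univ.filter (fun uw : T.C × T.C =>
      uw.1 ∈ (T.path v a).support ∧ uw.1 ≠ v ∧ T.G.Adj uw.1 uw.2 ∧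
        uw.2 ∉ (T.path v a).support),
    T.q uw.1 uw.2

/-- The multiplicity `N_v = Σ_{α ∈ A∖A₀} x_{v,α}`. -/
noncomputable def N (v : T.C) : ℤ :=
  ∑ a ∈ Finset.univ.filter (fun a => T.isArrow a ∧ T.f a ≠ 0), T.xva v a

/-- The multiplicity of the tree, `M(T) = -Σ_{v ∈ V∪A₀} N_v (δ_v - 2)`. -/
noncomputable def M : ℤ :=
  - ∑ v ∈ Finset.univ.filter (fun v => ¬ T.isArrow v ∨ T.f v = 0),
      T.N v * ((T.G.degree v : ℤ) - 2)

/-- `p(α, e_α) = Σ_{β ∈ (A∖A₀)∖{α}} x̂_{α,β}` for an arrow `α`. -/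
noncomputable def parrow (a : T.C) : ℤ :=
  ∑ b ∈ Finset.univ.filter (fun b => T.isArrow b ∧ T.f b ≠ 0 ∧ b ≠ a), T.xhat a b

/-- `F(T) = Σ_{α ∈ A∖A₀} gcd(f(α), p(α, e_α))`. -/
noncomputable def F : ℤ :=
  ∑ a ∈ Finset.univ.filter (fun a => T.isArrow a ∧ T.f a ≠ 0),
    (Int.gcd (T.f a) (T.parrow a) : ℤ)

/-- `Q(e,x)` for `e = {x,y}`: product of the decorations near `x` of the
other edges incident to `x`. -/
noncomputable def Qe (x y : T.C) : ℤ :=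
  ∏ w ∈ (T.G.neighborFinset x).erase y, T.q x w

/-- `lt T v0 x y` means `x < y` in the order rooted at `v0`:
`x ≠ y` and `x` lies on the path from `v0` to `y`. -/
def lt (v0 x y : T.C) : Prop :=
  x ≠ y ∧ x ∈ (T.path v0 y).support

/-- `v0` is a root: a vertex all of whose edge decorations are `1`, such that
for every other vertex `v`, all edges at `v` not on the path `γ_{v0,v}` have
decoration `≥ 1` near `v`, at most one of them being `> 1`. -/
def IsRoot (v0 : T.C) : Prop :=
  ¬ T.isArrow v0 ∧
  (∀ x, T.G.Adj v0 x → T.q v0 x = 1) ∧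
  ∀ v, ¬ T.isArrow v → v ≠ v0 →
    (∀ x, T.G.Adj v x → s(v, x) ∉ (T.path v0 v).edges → 1 ≤ T.q v x) ∧
    (∀ x y, T.G.Adj v x → T.G.Adj v y →
      s(v, x) ∉ (T.path v0 v).edges → s(v, y) ∉ (T.path v0 v).edges →
      1 < T.q v x → 1 < T.q v y → x = y)

/-- The tree has negative determinants: `det(e) < 0` for every edge `e`
joining two vertices. -/
def HasNegDet : Prop :=
  ∀ x y, ¬ T.isArrow x → ¬ T.isArrow y → T.G.Adj x y →
    T.q x y * T.q y x - T.Qe x y * T.Qe y x < 0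

/-- A subset `S` of the cells is connected if every path whose endpoints lie
in `S` lies entirely in `S`. -/
def ConnectedSet (S : Set T.C) : Prop :=
  ∀ x y, x ∈ S → y ∈ S → ∀ u, u ∈ (T.path x y).support → u ∈ S

/-- `φ(x,y)`: product of `q(ε,u)` over cells `u ≠ x` of the path from `x` to
`y` and edges `ε` incident to `u` not lying on the path. -/
noncomputable def phi (x y : T.C) : ℤ :=
  ∏ uw ∈ Finset.univ.filter (fun uw : T.C × T.C =>
      uw.1 ∈ (T.path x y).support ∧ uw.1 ≠ x ∧ T.G.Adj uw.1 uw.2 ∧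
        uw.2 ∉ (T.path x y).support),
    T.q uw.1 uw.2

end DecTree

/-! Work modulo 2 and write `N_v = Σ_β f(β) P(v,β)`, where `P(v,β)` is the product of the
decorations of the edges incident to the path from `v` to `β`. The key fact is that
`Σ_v δ_v P(v,α) ≡ 0` for every arrow `α`. Indeed, for each edge `w → u` the weighted sum
`Σ_v δ_v φ(w,v)` over the branch behind `u` is odd, by induction on the branch: at `u` at most
one of the pairwise coprime decorations is even, and the recursion at `u` then always returns 1.
Applied to the edge leaving `α`, together with the term `δ_α P(α,α) = 1`, this gives an even sum.
Hence `M ≡ Σ_{α ∈ A∖A₀} N_α`. On the other hand `p(α, e_α) = N_α - f(α)` and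
`gcd(m, k) ≡ mk + m + k`, so `F ≡ Σ_α (f(α) N_α + f(α) + N_α)`. Finally
`Σ_α f(α) N_α = Σ_{α,β} f(α) f(β) P(α,β)` is a symmetric double sum, hence congruent to its
diagonal `Σ_α f(α)`, and everything cancels. -/

theorem ZMod.intCast_gcd_two (m k : ℤ) :
    ((Int.gcd m k : ℤ) : ZMod 2) = m * k + m + k := by
  have hzero : ((Int.gcd m k : ℤ) : ZMod 2) = 0 ↔ (m : ZMod 2) = 0 ∧ (k : ZMod 2) = 0 := by
    simp only [ZMod.intCast_zmod_eq_zero_iff_dvd]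
    exact ⟨fun h => ⟨h.trans (Int.gcd_dvd_left m k), h.trans (Int.gcd_dvd_right m k)⟩,
      fun h => Int.dvd_coe_gcd h.1 h.2⟩
  generalize ((Int.gcd m k : ℤ) : ZMod 2) = g at hzero ⊢
  generalize (m : ZMod 2) = a at hzero ⊢
  generalize (k : ZMod 2) = b at hzero ⊢
  revert a b g
  decide

theorem Finset.sum_sum_eq_sum_self_of_charTwo {α R : Type*} [DecidableEq α] [Semiring R]
    [CharP R 2] (s : Finset α) (h : α → α → R) (hsymm : ∀ a b, h a b = h b a) :
    ∑ a ∈ s, ∑ b ∈ s, h a b = ∑ a ∈ s, h a a := by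
  have hoff : ∑ p ∈ s.offDiag, h p.1 p.2 = 0 :=
    sum_involution (fun p _ => p.swap)
      (fun p _ => by simp [hsymm p.1 p.2, CharTwo.add_self_eq_zero])
      (fun p hp _ => by simpa [Prod.ext_iff, eq_comm] using (mem_offDiag.mp hp).2.2)
      (fun p hp => by simp only [mem_offDiag, Prod.fst_swap, Prod.snd_swap] at hp ⊢; tauto)
      (fun _ _ => rfl)
  rw [← sum_product', ← diag_union_offDiag, sum_union (disjoint_diag_offDiag s), sum_diag, hoff,
    add_zero]

theorem ZMod.card_add_one_mul_prod_add_sum_prod_erase {α : Type*} [DecidableEq α]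
    (s : Finset α) (b : α → ZMod 2) (hb : ∀ y ∈ s, ∀ z ∈ s, y ≠ z → b y = 1 ∨ b z = 1) :
    ((#s : ZMod 2) + 1) * ∏ y ∈ s, b y + ∑ c ∈ s, ∏ y ∈ s.erase c, b y = 1 := by
  by_cases h : ∀ y ∈ s, b y = 1
  · have herase : ∀ c ∈ s, ∏ y ∈ s.erase c, b y = 1 := fun c _ =>
      prod_eq_one fun y hy => h y (mem_of_mem_erase hy)
    rw [prod_eq_one h, sum_congr rfl herase, sum_const, nsmul_one]
    generalize (#s : ZMod 2) = n
    revert n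
    decide
  · push Not at h
    obtain ⟨c₀, hc₀, hbc₀⟩ := h
    replace hbc₀ : b c₀ = 0 := (by decide : ∀ x : ZMod 2, x ≠ 1 → x = 0) _ hbc₀
    rw [prod_eq_zero hc₀ hbc₀, mul_zero, zero_add, sum_eq_single_of_mem c₀ hc₀
      fun c hc hne => prod_eq_zero (mem_erase.mpr ⟨hne.symm, hc₀⟩) hbc₀]
    refine prod_eq_one fun y hy => ?_
    obtain ⟨hyc, hys⟩ := mem_erase.mp hy
    exact (hb y hys c₀ hc₀ hyc).resolve_right (by rw [hbc₀]; decide)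

namespace DecTree

open SimpleGraph Walk

variable (T : DecTree)

section Paths

theorem path_isPath (x y : T.C) : (T.path x y).IsPath :=
  (T.isTree.existsUnique_path x y).exists.choose_spec

theorem eq_path_of_isPath {x y : T.C} {p : T.G.Walk x y} (hp : p.IsPath) : p = T.path x y :=
  (T.isTree.existsUnique_path x y).unique hp (T.path_isPath x y)

theorem path_self (x : T.C) : T.path x x = nil :=
  (T.eq_path_of_isPath IsPath.nil).symm

theorem path_of_adj {x y : T.C} (h : T.G.Adj x y) : T.path x y = cons h nil :=
  (T.eq_path_of_isPath (IsPath.nil.cons (by simp [h.ne]))).symm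

theorem mem_support_path_comm {u x y : T.C} :
    u ∈ (T.path x y).support ↔ u ∈ (T.path y x).support := by
  rw [← T.eq_path_of_isPath (T.path_isPath x y).reverse, support_reverse, List.mem_reverse]

theorem path_eq_append {u x y : T.C} (h : u ∈ (T.path x y).support) :
    T.path x y = (T.path x u).append (T.path u y) := by
  have hp := T.path_isPath x y
  conv_lhs => rw [← take_spec (T.path x y) h]
  rw [T.eq_path_of_isPath (hp.takeUntil h), T.eq_path_of_isPath (hp.dropUntil h)]

theorem path_eq_cons_of_mem {u y v : T.C} (h : T.G.Adj u y) (hy : y ∈ (T.path u v).support) :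
    T.path u v = cons h (T.path y v) := by
  rw [T.path_eq_append hy, T.path_of_adj h, cons_append, nil_append]

theorem path_eq_cons_of_not_mem {w u v : T.C} (h : T.G.Adj w u)
    (hw : w ∉ (T.path u v).support) : T.path w v = cons h (T.path u v) :=
  (T.eq_path_of_isPath ((T.path_isPath u v).cons hw)).symm

theorem eq_of_adj_of_mem_support {u v y c : T.C} (hy : T.G.Adj u y) (hc : T.G.Adj u c)
    (hys : y ∈ (T.path u v).support) (hcs : c ∈ (T.path u v).support) : y = c := by
  simpa using congrArg (·.getVert 1)
    ((T.path_eq_cons_of_mem hy hys).symm.trans (T.path_eq_cons_of_mem hc hcs))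

theorem not_mem_support_of_adj {w u v c : T.C} (hwu : T.G.Adj w u) (hc : T.G.Adj u c)
    (hcw : c ≠ w) (hcs : c ∈ (T.path u v).support) : w ∉ (T.path u v).support :=
  fun hw => hcw (T.eq_of_adj_of_mem_support hc hwu.symm hcs hw)

theorem exists_adj_mem_support {u v : T.C} (huv : u ≠ v) :
    ∃ c, T.G.Adj u c ∧ c ∈ (T.path u v).support := by
  have hn : ¬ (T.path u v).Nil := not_nil_of_ne huv
  exact ⟨_, adj_snd hn, getVert_mem_support _ 1⟩

end Paths

section Arrows

variable {T}

theorem existsUnique_adj_of_isArrow {a : T.C} (ha : T.isArrow a) : ∃! n, T.G.Adj a n :=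
  degree_eq_one_iff_existsUnique_adj.mp (T.arrowValency a ha)

theorem mem_support_path_of_isArrow {a n v : T.C} (ha : T.isArrow a) (han : T.G.Adj a n)
    (hv : v ≠ a) : n ∈ (T.path a v).support := by
  obtain ⟨c, hac, hcs⟩ := T.exists_adj_mem_support hv.symm
  rwa [(existsUnique_adj_of_isArrow ha).unique han hac]

theorem q_cast_eq_one_or {u y z : T.C} (hy : T.G.Adj u y) (hz : T.G.Adj u z) (hyz : y ≠ z) :
    (T.q u y : ZMod 2) = 1 ∨ (T.q u z : ZMod 2) = 1 := by
  have hu : ¬ T.isArrow u := fun hu => hyz ((existsUnique_adj_of_isArrow hu).unique hy hz)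
  have hc := (T.q_coprime u y z hu hy hz hyz).map (Int.castRingHom (ZMod 2))
  simp only [eq_intCast] at hc
  generalize (T.q u y : ZMod 2) = r at hc ⊢
  generalize (T.q u z : ZMod 2) = s at hc ⊢
  have hbit : ∀ x : ZMod 2, x = 0 ∨ x = 1 := by decide
  rcases hbit r with rfl | rfl
  · rcases hbit s with rfl | rfl
    · exact absurd hc not_isCoprime_zero_zero
    · exact .inr rfl
  · exact .inl rfl

end Arrows

section HangingProducts

noncomputable def leavingProd (L : List T.C) (u : T.C) : ℤ :=
  ∏ z ∈ (T.G.neighborFinset u).filter (· ∉ L), T.q u z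

theorem phi_eq_prod_leavingProd (x y : T.C) :
    T.phi x y = ∏ u ∈ (T.path x y).support.toFinset.erase x,
      T.leavingProd (T.path x y).support u :=
  prod_finset_product _ _ _ fun p => by simp only [mem_filter, mem_univ, true_and, mem_erase,
    List.mem_toFinset, mem_neighborFinset]; tauto

theorem phi_of_adj {w u : T.C} (h : T.G.Adj w u) :
    T.phi w u = ∏ y ∈ (T.G.neighborFinset u).erase w, T.q u y := by
  rw [phi_eq_prod_leavingProd, T.path_of_adj h]
  simp only [support_cons, support_nil, List.toFinset_cons, List.toFinset_nil,
    insert_empty_eq]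
  rw [erase_insert (by simpa using h.ne), prod_singleton, leavingProd]
  congr 1
  ext z
  simp only [List.mem_cons, List.not_mem_nil, or_false, not_or, mem_filter, mem_neighborFinset,
    mem_erase, ne_eq]
  exact ⟨fun ⟨hz, hzw, _⟩ => ⟨hzw, hz⟩, fun ⟨hzw, hz⟩ => ⟨hz, hzw, hz.ne'⟩⟩

theorem phi_eq_prod_mul_phi {w u c v : T.C} (hwu : T.G.Adj w u) (huc : T.G.Adj u c)
    (hcw : c ≠ w) (hcs : c ∈ (T.path u v).support) :
    T.phi w v = (∏ y ∈ ((T.G.neighborFinset u).erase w).erase c, T.q u y) * T.phi u v := by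
  have hw := T.not_mem_support_of_adj hwu huc hcw hcs
  have hsupp : (T.path w v).support = w :: (T.path u v).support := by
    rw [T.path_eq_cons_of_not_mem hwu hw, support_cons]
  rw [phi_eq_prod_leavingProd, phi_eq_prod_leavingProd, hsupp, List.toFinset_cons,
    erase_insert (by simpa using hw),
    ← mul_prod_erase _ _ (List.mem_toFinset.mpr (start_mem_support _))]
  -- `c` is the only neighbour of `u` on the path to `v`, and `w` is adjacent to no other cell
  -- of that path.
  congr 1
  · rw [leavingProd]
    congr 1
    ext z
    simp only [List.mem_cons, not_or, mem_filter, mem_neighborFinset, mem_erase, ne_eq]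
    constructor
    · rintro ⟨hz, hzw, hzs⟩
      exact ⟨fun hzc => hzs (hzc ▸ hcs), hzw, hz⟩
    · rintro ⟨hzc, hzw, hz⟩
      exact ⟨hz, hzw, fun hzs => hzc (T.eq_of_adj_of_mem_support hz huc hzs hcs)⟩
  · refine prod_congr rfl fun x hx => prod_congr (filter_congr fun z hz => ?_) fun _ _ => rfl
    obtain ⟨hxu, hxs⟩ : x ≠ u ∧ x ∈ (T.path u v).support := by simpa using hx
    rw [mem_neighborFinset] at hz
    refine ⟨fun h => h ∘ List.mem_cons_of_mem w, fun h hzs' => ?_⟩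
    rcases List.mem_cons.mp hzs' with rfl | hzs
    · refine hxu (T.eq_of_adj_of_mem_support (v := v) hz.symm hwu ?_ ?_) <;> simp [hsupp, hxs]
    · exact h hzs

end HangingProducts

section IncidentProducts

noncomputable def incidentProd (v a : T.C) : ℤ :=
  ∏ uw ∈ univ.filter (fun uw : T.C × T.C =>
      uw.1 ∈ (T.path v a).support ∧ T.G.Adj uw.1 uw.2 ∧ uw.2 ∉ (T.path v a).support),
    T.q uw.1 uw.2

theorem xva_eq_mul_incidentProd (v a : T.C) : T.xva v a = T.f a * T.incidentProd v a := rfl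

theorem incidentProd_comm (v a : T.C) : T.incidentProd v a = T.incidentProd a v :=
  prod_congr (filter_congr fun _ _ => by simp only [T.mem_support_path_comm]) fun _ _ => rfl

variable {T}

theorem incidentProd_self_of_isArrow {a : T.C} (ha : T.isArrow a) : T.incidentProd a a = 1 :=
  prod_eq_one fun uw huw => by
    obtain ⟨h1, hadj, -⟩ : uw.1 = a ∧ T.G.Adj uw.1 uw.2 ∧ _ := by simpa [T.path_self] using huw
    rw [h1] at hadj ⊢
    exact T.q_arrow a _ ha hadj

theorem ne_of_adj_of_not_mem_support {a v x y : T.C} (ha : T.isArrow a) (hv : v ≠ a)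
    (hxy : T.G.Adj x y) (hy : y ∉ (T.path a v).support) : x ≠ a := by
  rintro rfl
  exact hy (T.mem_support_path_of_isArrow ha hxy hv)

theorem incidentProd_eq_phi {a v : T.C} (ha : T.isArrow a) (hv : v ≠ a) :
    T.incidentProd v a = T.phi a v :=
  prod_congr (filter_congr fun uw _ => by
    simp only [T.mem_support_path_comm (x := v)]
    exact ⟨fun ⟨hx, hxy, hy⟩ => ⟨hx, ne_of_adj_of_not_mem_support ha hv hxy hy, hxy, hy⟩,
      fun ⟨hx, _, hxy, hy⟩ => ⟨hx, hxy, hy⟩⟩) fun _ _ => rfl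

theorem xhat_eq_xva {a b : T.C} (ha : T.isArrow a) (hb : b ≠ a) : T.xhat a b = T.xva a b :=
  congrArg (T.f b * ·) <| prod_congr (filter_congr fun _ _ =>
    ⟨fun ⟨hx, _, hxy, hy⟩ => ⟨hx, hxy, hy⟩,
      fun ⟨hx, hxy, hy⟩ => ⟨hx, ne_of_adj_of_not_mem_support ha hb hxy hy, hxy, hy⟩⟩)
    fun _ _ => rfl

end IncidentProducts

section Branches

noncomputable def branch (w u : T.C) : Finset T.C :=
  univ.filter fun v => u ∈ (T.path w v).support

variable {T}

theorem mem_branch {w u v : T.C} : v ∈ T.branch w u ↔ u ∈ (T.path w v).support := by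
  simp [branch]

theorem mem_branch_self {w u : T.C} (h : T.G.Adj w u) : u ∈ T.branch w u := by
  simp [mem_branch, T.path_of_adj h]

theorem branch_subset_erase {w u c : T.C} (hwu : T.G.Adj w u) (huc : T.G.Adj u c)
    (hcw : c ≠ w) : T.branch u c ⊆ (T.branch w u).erase u := by
  intro v hv
  rw [mem_branch] at hv
  rw [mem_erase, mem_branch,
    T.path_eq_cons_of_not_mem hwu (T.not_mem_support_of_adj hwu huc hcw hv), support_cons]
  refine ⟨?_, List.mem_cons_of_mem _ (start_mem_support _)⟩
  rintro rfl
  simp [T.path_self, huc.ne'] at hv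

theorem erase_branch_eq_biUnion {w u : T.C} (hwu : T.G.Adj w u) :
    (T.branch w u).erase u = ((T.G.neighborFinset u).erase w).biUnion (T.branch u) := by
  refine Subset.antisymm (fun v hv => ?_) (biUnion_subset.mpr fun c hc => ?_)
  · obtain ⟨hvu, hv⟩ := mem_erase.mp hv
    obtain ⟨c, huc, hcs⟩ := T.exists_adj_mem_support (Ne.symm hvu)
    have hw : w ∉ (T.path u v).support := by
      have hp := T.path_isPath w v
      rw [T.path_eq_cons_of_mem hwu (mem_branch.mp hv), cons_isPath_iff] at hp
      exact hp.2
    have hcw : c ≠ w := by rintro rfl; exact hw hcs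
    exact mem_biUnion.mpr ⟨c, by simp [huc, hcw], mem_branch.mpr hcs⟩
  · obtain ⟨hcw, huc⟩ := mem_erase.mp hc
    exact branch_subset_erase hwu ((mem_neighborFinset _ _ _).mp huc) hcw

theorem disjoint_branch {u c c' : T.C} (huc : T.G.Adj u c) (huc' : T.G.Adj u c')
    (hne : c ≠ c') : Disjoint (T.branch u c) (T.branch u c') :=
  disjoint_left.mpr fun _ hv hv' =>
    hne (T.eq_of_adj_of_mem_support huc huc' (mem_branch.mp hv) (mem_branch.mp hv'))

end Branches

section BranchParity

noncomputable def branchParity (w u : T.C) : ZMod 2 :=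
  ∑ v ∈ T.branch w u, (T.G.degree v : ZMod 2) * (T.phi w v : ZMod 2)

variable {T}

theorem branchParity_eq {w u : T.C} (hwu : T.G.Adj w u) :
    T.branchParity w u = (T.G.degree u : ZMod 2)
        * ∏ y ∈ (T.G.neighborFinset u).erase w, (T.q u y : ZMod 2)
      + ∑ c ∈ (T.G.neighborFinset u).erase w,
          (∏ y ∈ ((T.G.neighborFinset u).erase w).erase c, (T.q u y : ZMod 2))
            * T.branchParity u c := by
  have hdisj : ((T.G.neighborFinset u).erase w : Set T.C).PairwiseDisjoint (T.branch u) :=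
    fun c hc c' hc' hne => disjoint_branch (by simp_all) (by simp_all) hne
  have hsub : ∀ c ∈ (T.G.neighborFinset u).erase w,
      ∑ v ∈ T.branch u c, (T.G.degree v : ZMod 2) * (T.phi w v : ZMod 2)
        = (∏ y ∈ ((T.G.neighborFinset u).erase w).erase c, (T.q u y : ZMod 2))
            * T.branchParity u c := by
    intro c hc
    obtain ⟨hcw, huc⟩ := mem_erase.mp hc
    rw [branchParity, mul_sum]
    refine sum_congr rfl fun v hv => ?_
    rw [T.phi_eq_prod_mul_phi hwu ((mem_neighborFinset _ _ _).mp huc) hcw (mem_branch.mp hv)]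
    push_cast
    ring
  rw [branchParity, ← add_sum_erase _ _ (mem_branch_self hwu), erase_branch_eq_biUnion hwu,
    sum_biUnion hdisj, sum_congr rfl hsub, T.phi_of_adj hwu]
  push_cast
  rfl

theorem branchParity_eq_one {w u : T.C} (hwu : T.G.Adj w u) : T.branchParity w u = 1 := by
  have ih : ∀ c ∈ (T.G.neighborFinset u).erase w, T.branchParity u c = 1 := fun c hc =>
    have hcw := (mem_erase.mp hc).1
    have huc := (mem_neighborFinset _ _ _).mp (mem_erase.mp hc).2
    branchParity_eq_one huc
  have hdeg : T.G.degree u = #((T.G.neighborFinset u).erase w) + 1 := by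
    rw [← card_neighborFinset_eq_degree, card_erase_add_one (by simpa using hwu.symm)]
  rw [branchParity_eq hwu, sum_congr rfl fun c hc => by rw [ih c hc, mul_one], hdeg,
    Nat.cast_succ]
  refine ZMod.card_add_one_mul_prod_add_sum_prod_erase _ _ fun y hy z hz hyz =>
    T.q_cast_eq_one_or ?_ ?_ hyz <;> simp_all
termination_by #(T.branch w u)
decreasing_by
  exact (card_le_card (branch_subset_erase hwu huc hcw)).trans_lt
    (card_erase_lt_of_mem (mem_branch_self hwu))

theorem sum_degree_mul_incidentProd_eq_zero {a : T.C} (ha : T.isArrow a) :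
    ∑ v, (T.G.degree v : ZMod 2) * (T.incidentProd v a : ZMod 2) = 0 := by
  obtain ⟨n, han, -⟩ := existsUnique_adj_of_isArrow ha
  have hbranch : T.branch a n = univ.erase a := by
    ext v
    rw [mem_branch, mem_erase]
    refine ⟨fun h => ⟨?_, mem_univ v⟩, fun ⟨hv, _⟩ =>
      T.mem_support_path_of_isArrow ha han hv⟩
    rintro rfl
    simp [T.path_self, han.ne'] at h
  have hbranchParity :
      ∑ v ∈ univ.erase a, (T.G.degree v : ZMod 2) * (T.incidentProd v a : ZMod 2)
        = T.branchParity a n := by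
    rw [branchParity, hbranch]
    exact sum_congr rfl fun v hv => by rw [incidentProd_eq_phi ha (ne_of_mem_erase hv)]
  rw [← add_sum_erase _ _ (mem_univ a), hbranchParity, branchParity_eq_one han,
    incidentProd_self_of_isArrow ha, T.arrowValency a ha]
  decide

end BranchParity

section Parity

/-- The set `A ∖ A₀`. -/
noncomputable def liveArrows : Finset T.C :=
  univ.filter fun a => T.isArrow a ∧ T.f a ≠ 0

theorem cast_N (v : T.C) :
    (T.N v : ZMod 2)
      = ∑ b ∈ T.liveArrows, (T.f b : ZMod 2) * (T.incidentProd v b : ZMod 2) := by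
  simp [N, liveArrows, xva_eq_mul_incidentProd]

theorem sum_N_mul_degree_eq_zero : ∑ v, (T.N v : ZMod 2) * (T.G.degree v : ZMod 2) = 0 := by
  simp_rw [cast_N, sum_mul]
  rw [sum_comm]
  refine sum_eq_zero fun b hb => ?_
  have ha : T.isArrow b := (mem_filter.mp hb).2.1
  calc ∑ v, (T.f b : ZMod 2) * (T.incidentProd v b : ZMod 2) * (T.G.degree v : ZMod 2)
      = (T.f b : ZMod 2) * ∑ v, (T.G.degree v : ZMod 2) * (T.incidentProd v b : ZMod 2) := by
        rw [mul_sum]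
        exact sum_congr rfl fun _ _ => by ring
    _ = 0 := by rw [sum_degree_mul_incidentProd_eq_zero ha, mul_zero]

theorem cast_M : (T.M : ZMod 2) = ∑ a ∈ T.liveArrows, (T.N a : ZMod 2) := by
  have hlive : univ.filter (fun v => ¬ (¬ T.isArrow v ∨ T.f v = 0)) = T.liveArrows :=
    filter_congr fun v _ => by tauto
  have hsplit := sum_filter_add_sum_filter_not univ (fun v => ¬ T.isArrow v ∨ T.f v = 0)
    fun v => (T.N v : ZMod 2) * (T.G.degree v : ZMod 2)
  rw [sum_N_mul_degree_eq_zero, hlive, CharTwo.add_eq_zero] at hsplit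
  simp only [M, Int.cast_neg, Int.cast_sum, Int.cast_mul, Int.cast_sub, Int.cast_natCast,
    Int.cast_ofNat, CharTwo.neg_eq, CharTwo.two_eq_zero, sub_zero, hsplit]
  exact sum_congr rfl fun a ha => by
    rw [T.arrowValency a (mem_filter.mp ha).2.1, Nat.cast_one, mul_one]

theorem parrow_eq_N_sub {a : T.C} (ha : a ∈ T.liveArrows) : T.parrow a = T.N a - T.f a := by
  have hfilter : univ.filter (fun b => T.isArrow b ∧ T.f b ≠ 0 ∧ b ≠ a) = T.liveArrows.erase a :=
    by ext; simp only [liveArrows, mem_filter, mem_univ, true_and, mem_erase]; tauto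
  rw [parrow, hfilter, N, ← liveArrows, ← add_sum_erase _ _ ha, xva_eq_mul_incidentProd,
    incidentProd_self_of_isArrow (mem_filter.mp ha).2.1, mul_one, add_sub_cancel_left]
  exact sum_congr rfl fun b hb => xhat_eq_xva (mem_filter.mp ha).2.1 (ne_of_mem_erase hb)

theorem cast_F :
    (T.F : ZMod 2) = ∑ a ∈ T.liveArrows, ((T.f a : ZMod 2) * T.N a + T.f a + T.N a) := by
  rw [F, Int.cast_sum, ← liveArrows]
  refine sum_congr rfl fun a ha => ?_
  rw [ZMod.intCast_gcd_two, parrow_eq_N_sub T ha, Int.cast_sub]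
  generalize (T.f a : ZMod 2) = x
  generalize (T.N a : ZMod 2) = y
  revert x y
  decide

theorem sum_f_mul_N :
    ∑ a ∈ T.liveArrows, (T.f a : ZMod 2) * T.N a = ∑ a ∈ T.liveArrows, (T.f a : ZMod 2) := by
  simp_rw [cast_N, mul_sum]
  rw [sum_sum_eq_sum_self_of_charTwo _ _ fun a b => by rw [incidentProd_comm]; ring]
  refine sum_congr rfl fun a ha => ?_
  rw [incidentProd_self_of_isArrow (mem_filter.mp ha).2.1, Int.cast_one, mul_one, ← sq]
  generalize (T.f a : ZMod 2) = x
  revert x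
  decide

theorem even_M_add_F : Even (T.M + T.F) := by
  rw [← ZMod.intCast_eq_zero_iff_even, Int.cast_add, cast_M, cast_F, ← sum_add_distrib]
  calc ∑ a ∈ T.liveArrows, ((T.N a : ZMod 2) + ((T.f a : ZMod 2) * T.N a + T.f a + T.N a))
      = ∑ a ∈ T.liveArrows, ((T.f a : ZMod 2) * T.N a + T.f a) :=
        sum_congr rfl fun a _ => by rw [add_comm, add_assoc, CharTwo.add_self_eq_zero, add_zero]
    _ = 0 := by rw [sum_add_distrib, sum_f_mul_N, CharTwo.add_self_eq_zero]

end Parity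

end DecTree

/-- For every decorated tree `T`, the number `M(T) + F(T)` is even;
consequently the genus `g(T) = (2 - M(T) - F(T))/2` and the δ-invariant
`δ(T) = (F(T) - M(T))/2` are integers. -/
theorem stmt11 (T : DecTree) :
    Even (T.M + T.F) ∧
    (∃ g : ℤ, 2 * g = 2 - T.M - T.F) ∧
    (∃ d : ℤ, 2 * d = T.F - T.M) := by
  obtain ⟨k, hk⟩ := T.even_M_add_F
  exact ⟨⟨k, hk⟩, ⟨1 - k, by omega⟩, ⟨k - T.M, by omega⟩⟩
end
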